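/- arXiv:2005.05200 — 2 statements merged into one kernel-verified Lean document; each statement's English description precedes it below -/
import Mathlib

section
/- Let u₀ be strictly increasing on [a,b] with u₀(a) = −1, u₀(b) = 1 and unique zero x₁, and assume log u₀ ∉ L¹(x₁, b), i.e. ∫_{x₁}^b |log u₀(x)| dx = ∞. Let u be the unique classical solution of the limit problem (2.7). Then ∫_{x₁}^b log u(x,t) ψ(x) dx = −∞ for all t ∈ (0,T] and every ψ ∈ C_c¹([x₁,b]) with ψ(x₁) = 1 and ψ' ≤ 0; consequently τ₁⁺ = ∞, i.e. the one-sided derivative u_x(x₁⁺, t) = 0 for all t ∈ (0,T]. -/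
/-!
On `(x₁, b]` the solution is positive and `log u` solves `(log u)_t = u_xx + 1 - u`. Integrating
this against the weight `B - x` over `[A, B] × [s, t]` and integrating by parts bounds
`∫_A^B (B - x) (-log u(x, s)) dx` by the same integral at time `t` plus `C (t - s)`, provided the
flux `∫_s^t u_x(A, τ) dτ` is nonnegative; the weight vanishes at `B`, which removes the flux at
`B`, uncontrolled as `s → 0`. Such `A` exist arbitrarily close to `x₁`, since `∫_s^t u(x, τ) dτ`
is positive for `x > x₁` and vanishes at `x₁`. Letting `A → x₁` and then `s → 0` (Fatou), the
divergence of `∫ |log u₀|` at `x₁` propagates to every `t > 0`. Finally, a nonzero right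
derivative `u_x(x₁⁺, t)` would make `u(·, t)` negative or at least linear near `x₁`, and in the
latter case `-log u(·, t)` would be integrable there.
-/

open Set Filter MeasureTheory Topology

/-- Partial derivative in `x` of `u(x,t)`. -/
noncomputable def pdx (u : ℝ → ℝ → ℝ) (x t : ℝ) : ℝ := deriv (fun y => u y t) x

/-- Second partial derivative in `x` of `u(x,t)`. -/
noncomputable def pdxx (u : ℝ → ℝ → ℝ) (x t : ℝ) : ℝ := deriv (fun y => pdx u y t) x

/-- Partial derivative in `t` of `u(x,t)`, one-sided at `t = T`. -/
noncomputable def pdtW (T : ℝ) (u : ℝ → ℝ → ℝ) (x t : ℝ) : ℝ :=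
  derivWithin (fun s => u x s) (Set.Iic T) t

/-- `Q = (a,b) × (0,T]`. -/
def QT (a b T : ℝ) : Set (ℝ × ℝ) := Set.Ioo a b ×ˢ Set.Ioc 0 T

/-- `N = N₀ × [0,T]`. -/
def NSet (N₀ : Set ℝ) (T : ℝ) : Set (ℝ × ℝ) := N₀ ×ˢ Set.Icc 0 T

/-- Condition (2.8): `u₀` is continuous, `u₀(a) = -1`, `u₀(b) = 1`, the zeros of `u₀`
form the finite set `N₀ ⊆ (a,b)`, and `u₀` changes sign at each of its zeros. -/
structure InitData (a b : ℝ) (N₀ : Set ℝ) (u₀ : ℝ → ℝ) : Prop where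
  cont : ContinuousOn u₀ (Set.Icc a b)
  bdry_a : u₀ a = -1
  bdry_b : u₀ b = 1
  fin : N₀.Finite
  sub : N₀ ⊆ Set.Ioo a b
  zeros : ∀ x ∈ Set.Icc a b, (u₀ x = 0 ↔ x ∈ N₀)
  sign_change : ∀ x ∈ N₀, ∀ δ > 0,
    ∃ y ∈ Set.Ioo (x - δ) x, ∃ z ∈ Set.Ioo x (x + δ), u₀ y * u₀ z < 0

/-- A classical solution of the limit problem (2.7): `u ∈ C(Q̄)` vanishing exactly on `N`,
`C^{2,1}` on `Q ∖ N`, with boundary values `∓1`, initial value `u₀`, satisfying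
`u_t = |u| u_xx + u(1-|u|)` on `Q ∖ N`. -/
structure IsClassicalSol (a b T : ℝ) (N₀ : Set ℝ) (u₀ : ℝ → ℝ) (u : ℝ → ℝ → ℝ) : Prop where
  cont : ContinuousOn (fun p : ℝ × ℝ => u p.1 p.2) (Set.Icc a b ×ˢ Set.Icc 0 T)
  zero_iff : ∀ x ∈ Set.Icc a b, ∀ t ∈ Set.Icc 0 T, (u x t = 0 ↔ x ∈ N₀)
  diff_x : ∀ p ∈ QT a b T \ NSet N₀ T, DifferentiableAt ℝ (fun y => u y p.2) p.1
  diff_xx : ∀ p ∈ QT a b T \ NSet N₀ T, DifferentiableAt ℝ (fun y => pdx u y p.2) p.1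
  diff_t : ∀ p ∈ QT a b T \ NSet N₀ T,
    DifferentiableWithinAt ℝ (fun s => u p.1 s) (Set.Iic T) p.2
  cont_x : ContinuousOn (fun p : ℝ × ℝ => pdx u p.1 p.2) (QT a b T \ NSet N₀ T)
  cont_xx : ContinuousOn (fun p : ℝ × ℝ => pdxx u p.1 p.2) (QT a b T \ NSet N₀ T)
  cont_t : ContinuousOn (fun p : ℝ × ℝ => pdtW T u p.1 p.2) (QT a b T \ NSet N₀ T)
  bdry_a : ∀ t ∈ Set.Ioc 0 T, u a t = -1
  bdry_b : ∀ t ∈ Set.Ioc 0 T, u b t = 1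
  init : ∀ x ∈ Set.Ioo a b, u x 0 = u₀ x
  pde : ∀ p ∈ QT a b T \ NSet N₀ T,
    pdtW T u p.1 p.2 = |u p.1 p.2| * pdxx u p.1 p.2 + u p.1 p.2 * (1 - |u p.1 p.2|)

open scoped ENNReal

section Calculus

theorem integrableOn_Ioc_prod_Ioc_of_continuousOn {E : Type*} [NormedAddCommGroup E]
    {F : ℝ → ℝ → E} {a b c d : ℝ}
    (hF : ContinuousOn (Function.uncurry F) (Icc a b ×ˢ Icc c d)) :
    IntegrableOn (Function.uncurry F) (Ioc a b ×ˢ Ioc c d) :=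
  (hF.integrableOn_compact (isCompact_Icc.prod isCompact_Icc)).mono_set
    (prod_mono Ioc_subset_Icc_self Ioc_subset_Icc_self)

theorem intervalIntegral_swap_of_continuousOn {E : Type*} [NormedAddCommGroup E]
    [NormedSpace ℝ E] {F : ℝ → ℝ → E} {a b c d : ℝ}
    (hab : a ≤ b) (hcd : c ≤ d) (hF : ContinuousOn (Function.uncurry F) (Icc a b ×ˢ Icc c d)) :
    ∫ x in a..b, ∫ y in c..d, F x y = ∫ y in c..d, ∫ x in a..b, F x y := by
  apply intervalIntegral_intervalIntegral_swap
  rw [uIoc_of_le hab, uIoc_of_le hcd]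
  exact integrableOn_Ioc_prod_Ioc_of_continuousOn hF

theorem intervalIntegrable_intervalIntegral_of_continuousOn {E : Type*} [NormedAddCommGroup E]
    [NormedSpace ℝ E] {F : ℝ → ℝ → E} {a b c d : ℝ}
    (hab : a ≤ b) (hcd : c ≤ d) (hF : ContinuousOn (Function.uncurry F) (Icc a b ×ˢ Icc c d)) :
    IntervalIntegrable (fun y => ∫ x in a..b, F x y) volume c d := by
  have hint := integrableOn_Ioc_prod_Ioc_of_continuousOn hF
  rw [IntegrableOn, Measure.volume_eq_prod, ← Measure.prod_restrict] at hint
  rw [intervalIntegrable_iff_integrableOn_Ioc_of_le hcd]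
  simp_rw [intervalIntegral.integral_of_le hab]
  exact hint.integral_prod_right

theorem integral_sub_mul_deriv_deriv {f f' f'' : ℝ → ℝ} {a b : ℝ}
    (hf : ∀ x ∈ uIcc a b, HasDerivAt f (f' x) x) (hf' : ∀ x ∈ uIcc a b, HasDerivAt f' (f'' x) x)
    (hint' : IntervalIntegrable f' volume a b) (hint'' : IntervalIntegrable f'' volume a b) :
    ∫ x in a..b, (b - x) * f'' x = f b - f a - (b - a) * f' a := by
  have hw : ∀ x ∈ uIcc a b, HasDerivAt (fun y => b - y) (-1) x :=
    fun x _ => by simpa using (hasDerivAt_id x).const_sub b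
  rw [intervalIntegral.integral_mul_deriv_eq_deriv_mul hw hf' intervalIntegrable_const hint'']
  simp only [neg_one_mul, intervalIntegral.integral_neg,
    intervalIntegral.integral_eq_sub_of_hasDerivAt hf hint']
  ring

theorem setLIntegral_Ioo_eq_top_of_continuousOn {g : ℝ → ℝ} {a b c : ℝ}
    (hg : ContinuousOn g (Icc c b)) (h : ∫⁻ x in Ioo a b, ENNReal.ofReal (g x) = ∞) :
    ∫⁻ x in Ioo a c, ENNReal.ofReal (g x) = ∞ := by
  have hsub : Ioo a b ⊆ Ioo a c ∪ Icc c b := fun x hx => by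
    rcases lt_or_ge x c with hxc | hxc
    exacts [Or.inl ⟨hx.1, hxc⟩, Or.inr ⟨hxc, hx.2.le⟩]
  have hle := (lintegral_mono_set (μ := volume) (f := fun x => ENNReal.ofReal (g x)) hsub).trans
    (lintegral_union_le _ (Ioo a c) (Icc c b))
  rw [h, top_le_iff, ENNReal.add_eq_top] at hle
  exact hle.resolve_right (hg.integrableOn_Icc.lintegral_lt_top).ne

theorem setLIntegral_Ioo_le_of_forall_Ioc {f : ℝ → ℝ≥0∞} {a b : ℝ} {C : ℝ≥0∞}
    (h : ∀ ε > 0, ∫⁻ x in Ioc (a + ε) b, f x ≤ C) : ∫⁻ x in Ioo a b, f x ≤ C := by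
  have hsub : Ioo a b ⊆ ⋃ n : ℕ, Ioc (a + 1 / (n + 1)) b := fun x hx => by
    obtain ⟨n, hn⟩ := exists_nat_one_div_lt (sub_pos.2 hx.1)
    exact mem_iUnion.2 ⟨n, by linarith, hx.2.le⟩
  have hmono : Monotone fun n : ℕ => Ioc (a + 1 / ((n : ℝ) + 1)) b := fun m n hmn =>
    Ioc_subset_Ioc_left (by gcongr)
  calc ∫⁻ x in Ioo a b, f x ≤ ∫⁻ x in ⋃ n : ℕ, Ioc (a + 1 / (n + 1)) b, f x :=
        lintegral_mono_set hsub
    _ = ⨆ n : ℕ, ∫⁻ x in Ioc (a + 1 / (n + 1)) b, f x :=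
        setLIntegral_iUnion_of_directed f hmono.directed_le
    _ ≤ C := iSup_le fun n => h _ (by positivity)

theorem ofReal_intervalIntegral_eq_setLIntegral {g : ℝ → ℝ} {a b : ℝ} (hab : a ≤ b)
    (hg : ContinuousOn g (Icc a b)) (hnn : ∀ x ∈ Ioc a b, 0 ≤ g x) :
    ENNReal.ofReal (∫ x in a..b, g x) = ∫⁻ x in Ioc a b, ENNReal.ofReal (g x) := by
  rw [intervalIntegral.integral_of_le hab]
  exact ofReal_integral_eq_lintegral_ofReal (hg.integrableOn_Icc.mono_set Ioc_subset_Icc_self)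
    ((ae_restrict_iff' measurableSet_Ioc).2 (ae_of_all _ hnn))

theorem setLIntegral_ofReal_neg_log_ne_top {f : ℝ → ℝ} {x₀ c r : ℝ} (hr : 0 < r)
    (hf : ∀ x ∈ Ioo x₀ c, r * (x - x₀) ≤ f x) :
    ∫⁻ x in Ioo x₀ c, ENNReal.ofReal (-Real.log (f x)) ≠ ∞ := by
  have hlog : IntegrableOn (fun x => -Real.log r - Real.log (x - x₀)) (Ioo x₀ c) := by
    have h := (intervalIntegral.intervalIntegrable_log' (a := 0) (b := c - x₀)).comp_sub_right x₀
    rw [zero_add, sub_add_cancel] at h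
    exact (integrableOn_const (by simp)).sub
      (h.def'.mono_set (Ioo_subset_Ioc_self.trans Ioc_subset_uIoc))
  refine ne_top_of_le_ne_top hlog.lintegral_lt_top.ne (setLIntegral_mono' measurableSet_Ioo
    fun x hx => ENNReal.ofReal_le_ofReal ?_)
  have hx₀ : 0 < x - x₀ := sub_pos.2 hx.1
  have := Real.log_le_log (by positivity) (hf x hx)
  rw [Real.log_mul hr.ne' hx₀.ne'] at this
  linarith

theorem setLIntegral_eq_top_of_le_const_mul {α : Type*} [MeasurableSpace α] {μ : Measure α}
    {f g : α → ℝ≥0∞} {s : Set α} {K : ℝ≥0∞} (hs : MeasurableSet s) (hK : K ≠ ∞)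
    (hfg : ∀ x ∈ s, f x ≤ K * g x) (hf : ∫⁻ x in s, f x ∂μ = ∞) : ∫⁻ x in s, g x ∂μ = ∞ := by
  by_contra hg
  have hle := setLIntegral_mono' (μ := μ) hs hfg
  rw [lintegral_const_mul' K g hK, hf, top_le_iff] at hle
  exact ENNReal.mul_ne_top hK hg hle

theorem weight_mul_neg_log_nonneg {B x y : ℝ} (hx : x ≤ B) (hy : 0 < y) (hy1 : y ≤ 1) :
    0 ≤ (B - x) * -Real.log y :=
  mul_nonneg (sub_nonneg.2 hx) (neg_nonneg.2 (Real.log_nonpos hy.le hy1))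

end Calculus

namespace IsClassicalSol

variable {a b T x₁ : ℝ} {u₀ : ℝ → ℝ} {u : ℝ → ℝ → ℝ}

theorem mem_QT_diff_NSet (hx₁ : x₁ ∈ Ioo a b) {x t : ℝ} (hx : x ∈ Ioo x₁ b)
    (ht : t ∈ Ioc 0 T) : (x, t) ∈ QT a b T \ NSet {x₁} T :=
  ⟨⟨⟨hx₁.1.trans hx.1, hx.2⟩, ht⟩, fun h => hx.1.ne' h.1⟩

theorem Icc_prod_Icc_subset (hx₁ : x₁ ∈ Ioo a b) {A B s t : ℝ} (hA : x₁ < A) (hB : B < b)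
    (hs : 0 < s) (ht : t ≤ T) : Icc A B ×ˢ Icc s t ⊆ QT a b T \ NSet {x₁} T :=
  fun _ hp => mem_QT_diff_NSet hx₁ ⟨hA.trans_le hp.1.1, hp.1.2.trans_lt hB⟩
    ⟨hs.trans_le hp.2.1, hp.2.2.trans ht⟩

theorem continuousOn_uncurry {N₀ : Set ℝ} (hu : IsClassicalSol a b T N₀ u₀ u) :
    ContinuousOn (Function.uncurry u) (Icc a b ×ˢ Icc 0 T) :=
  hu.cont

theorem continuousOn_uncurry_rect (hu : IsClassicalSol a b T {x₁} u₀ u) (hx₁ : x₁ ∈ Ioo a b)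
    {A B s t : ℝ} (hA : x₁ < A) (hB : B < b) (hs : 0 < s) (ht : t ≤ T) :
    ContinuousOn (Function.uncurry u) (Icc A B ×ˢ Icc s t) :=
  hu.continuousOn_uncurry.mono fun _ hp => have h := (Icc_prod_Icc_subset hx₁ hA hB hs ht hp).1
    ⟨Ioo_subset_Icc_self h.1, Ioc_subset_Icc_self h.2⟩

theorem continuousOn_uncurry_pdx (hu : IsClassicalSol a b T {x₁} u₀ u) (hx₁ : x₁ ∈ Ioo a b)
    {A B s t : ℝ} (hA : x₁ < A) (hB : B < b) (hs : 0 < s) (ht : t ≤ T) :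
    ContinuousOn (Function.uncurry (pdx u)) (Icc A B ×ˢ Icc s t) :=
  hu.cont_x.mono (Icc_prod_Icc_subset hx₁ hA hB hs ht)

theorem continuousOn_uncurry_pdxx (hu : IsClassicalSol a b T {x₁} u₀ u) (hx₁ : x₁ ∈ Ioo a b)
    {A B s t : ℝ} (hA : x₁ < A) (hB : B < b) (hs : 0 < s) (ht : t ≤ T) :
    ContinuousOn (Function.uncurry (pdxx u)) (Icc A B ×ˢ Icc s t) :=
  hu.cont_xx.mono (Icc_prod_Icc_subset hx₁ hA hB hs ht)

theorem eq_zero (hu : IsClassicalSol a b T {x₁} u₀ u) (hx₁ : x₁ ∈ Ioo a b) {t : ℝ}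
    (ht : t ∈ Icc 0 T) : u x₁ t = 0 :=
  (hu.zero_iff x₁ (Ioo_subset_Icc_self hx₁) t ht).2 rfl

theorem pos (hu : IsClassicalSol a b T {x₁} u₀ u) (hx₁ : x₁ ∈ Ioo a b) {x t : ℝ}
    (hx : x ∈ Ioc x₁ b) (ht : t ∈ Ioc 0 T) : 0 < u x t := by
  have hsub : Icc x b ⊆ Icc a b := Icc_subset_Icc (hx₁.1.trans hx.1).le le_rfl
  by_contra! hle
  obtain ⟨y, hy, hy0⟩ := intermediate_value_Icc hx.2
    ((hu.continuousOn_uncurry.uncurry_right t (Ioc_subset_Icc_self ht)).mono hsub)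
    ⟨hle, by rw [hu.bdry_b t ht]; norm_num⟩
  have hyx₁ : y = x₁ := (hu.zero_iff y (hsub hy) t (Ioc_subset_Icc_self ht)).1 hy0
  exact hx.1.not_ge (hyx₁ ▸ hy.1)

theorem eventually_forall_abs_lt (hu : IsClassicalSol a b T {x₁} u₀ u) (hx₁ : x₁ ∈ Ioo a b)
    {e : ℝ} (he : 0 < e) : ∀ᶠ x in 𝓝 x₁, ∀ t ∈ Icc 0 T, |u x t| < e := by
  have hP : ∀ t ∈ Icc 0 T, ∀ᶠ p : ℝ × ℝ in 𝓝 (x₁, t),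
      p ∈ Icc a b ×ˢ Icc 0 T → |u p.1 p.2| < e := by
    intro t ht
    filter_upwards [eventually_nhdsWithin_iff.1
      (hu.cont (x₁, t) ⟨Ioo_subset_Icc_self hx₁, ht⟩ (Metric.ball_mem_nhds _ he))] with p hp hpS
    simpa [hu.eq_zero hx₁ ht, Real.dist_eq] using hp hpS
  filter_upwards [isCompact_Icc.eventually_forall_of_forall_eventually
    (P := fun x t => (x, t) ∈ Icc a b ×ˢ Icc 0 T → |u x t| < e) hP,
    Icc_mem_nhds hx₁.1 hx₁.2] with x hx hxab t ht
  exact hx t ht ⟨hxab, ht⟩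

theorem tendsto_integral_time (hu : IsClassicalSol a b T {x₁} u₀ u) (hx₁ : x₁ ∈ Ioo a b)
    {s t : ℝ} (hs : 0 ≤ s) (hst : s ≤ t) (ht : t ≤ T) :
    Tendsto (fun x => ∫ τ in s..t, u x τ) (𝓝 x₁) (𝓝 0) := by
  rw [Metric.tendsto_nhds]
  intro e he
  have hd : 0 < t - s + 1 := by linarith
  filter_upwards [hu.eventually_forall_abs_lt hx₁ (div_pos he hd)] with x hx
  rw [dist_zero_right]
  calc ‖∫ τ in s..t, u x τ‖ ≤ e / (t - s + 1) * |t - s| :=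
        intervalIntegral.norm_integral_le_of_norm_le_const fun τ hτ => by
          rw [uIoc_of_le hst] at hτ
          exact (hx τ ⟨hs.trans hτ.1.le, hτ.2.trans ht⟩).le
    _ < e := by
        rw [abs_of_nonneg (sub_nonneg.2 hst), div_mul_eq_mul_div, div_lt_iff₀ hd]
        linarith

theorem hasDerivAt_x (hu : IsClassicalSol a b T {x₁} u₀ u) (hx₁ : x₁ ∈ Ioo a b) {x t : ℝ}
    (hx : x ∈ Ioo x₁ b) (ht : t ∈ Ioc 0 T) : HasDerivAt (fun y => u y t) (pdx u x t) x :=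
  (hu.diff_x _ (mem_QT_diff_NSet hx₁ hx ht)).hasDerivAt

theorem hasDerivAt_pdx (hu : IsClassicalSol a b T {x₁} u₀ u) (hx₁ : x₁ ∈ Ioo a b) {x t : ℝ}
    (hx : x ∈ Ioo x₁ b) (ht : t ∈ Ioc 0 T) : HasDerivAt (fun y => pdx u y t) (pdxx u x t) x :=
  (hu.diff_xx _ (mem_QT_diff_NSet hx₁ hx ht)).hasDerivAt

theorem hasDerivAt_log_time (hu : IsClassicalSol a b T {x₁} u₀ u) (hx₁ : x₁ ∈ Ioo a b)
    {x t : ℝ} (hx : x ∈ Ioo x₁ b) (ht : t ∈ Ioo 0 T) :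
    HasDerivAt (fun s => Real.log (u x s)) (pdxx u x t + (1 - u x t)) t := by
  have hp := mem_QT_diff_NSet hx₁ hx (Ioo_subset_Ioc_self ht)
  have hpos : 0 < u x t := hu.pos hx₁ (Ioo_subset_Ioc_self hx) (Ioo_subset_Ioc_self ht)
  have hderiv : HasDerivAt (fun s => u x s) (pdtW T u x t) t :=
    (hu.diff_t _ hp).hasDerivWithinAt.hasDerivAt (Iic_mem_nhds ht.2)
  convert hderiv.log hpos.ne' using 1
  rw [hu.pde _ hp, abs_of_pos hpos]
  field_simp

theorem log_sub_log_eq_integral (hu : IsClassicalSol a b T {x₁} u₀ u) (hx₁ : x₁ ∈ Ioo a b)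
    {x s t : ℝ} (hx : x ∈ Ioo x₁ b) (hs : 0 < s) (hst : s ≤ t) (ht : t ≤ T) :
    Real.log (u x t) - Real.log (u x s) = ∫ τ in s..t, (pdxx u x τ + (1 - u x τ)) := by
  have hxx : x ∈ Icc x x := left_mem_Icc.2 le_rfl
  have hu_cont : ContinuousOn (fun τ => u x τ) (Icc s t) :=
    (hu.continuousOn_uncurry_rect hx₁ hx.1 hx.2 hs ht).uncurry_left x hxx
  refine (intervalIntegral.integral_eq_sub_of_hasDerivAt_of_le hst
    (hu_cont.log fun τ hτ => (hu.pos hx₁ (Ioo_subset_Ioc_self hx) ⟨hs.trans_le hτ.1,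
      hτ.2.trans ht⟩).ne')
    (fun τ hτ => hu.hasDerivAt_log_time hx₁ hx ⟨hs.trans hτ.1, hτ.2.trans_le ht⟩) ?_).symm
  exact (((hu.continuousOn_uncurry_pdxx hx₁ hx.1 hx.2 hs ht).uncurry_left x hxx).add
    (continuousOn_const.sub hu_cont)).intervalIntegrable_of_Icc hst

theorem integral_time_sub_eq (hu : IsClassicalSol a b T {x₁} u₀ u) (hx₁ : x₁ ∈ Ioo a b)
    {A A' s t : ℝ} (hA' : x₁ < A') (hA'A : A' ≤ A) (hA : A < b) (hs : 0 < s) (hst : s ≤ t)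
    (ht : t ≤ T) :
    (∫ τ in s..t, u A τ) - ∫ τ in s..t, u A' τ = ∫ x in A'..A, ∫ τ in s..t, pdx u x τ := by
  have hpdx := hu.continuousOn_uncurry_pdx hx₁ hA' hA hs ht
  have hcont := hu.continuousOn_uncurry_rect hx₁ hA' hA hs ht
  have hFTC : ∀ τ ∈ uIcc s t, u A τ - u A' τ = ∫ x in A'..A, pdx u x τ := fun τ hτ => by
    rw [uIcc_of_le hst] at hτ
    refine (intervalIntegral.integral_eq_sub_of_hasDerivAt (f := fun x => u x τ) (fun x hx => ?_)
      (hpdx.uncurry_right τ hτ |>.intervalIntegrable_of_Icc hA'A)).symm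
    rw [uIcc_of_le hA'A] at hx
    exact hu.hasDerivAt_x hx₁ ⟨hA'.trans_le hx.1, hx.2.trans_lt hA⟩
      ⟨hs.trans_le hτ.1, hτ.2.trans ht⟩
  rw [← intervalIntegral.integral_sub
      (hcont.uncurry_left A (right_mem_Icc.2 hA'A) |>.intervalIntegrable_of_Icc (μ := volume) hst)
      (hcont.uncurry_left A' (left_mem_Icc.2 hA'A) |>.intervalIntegrable_of_Icc hst),
    intervalIntegral.integral_congr hFTC,
    intervalIntegral_swap_of_continuousOn hA'A hst hpdx]

theorem exists_integral_pdx_nonneg (hu : IsClassicalSol a b T {x₁} u₀ u) (hx₁ : x₁ ∈ Ioo a b)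
    {s t c : ℝ} (hs : 0 < s) (hst : s < t) (ht : t ≤ T) (hc : x₁ < c) (hcb : c ≤ b) :
    ∃ A ∈ Ioo x₁ c, 0 ≤ ∫ τ in s..t, pdx u A τ := by
  by_contra! hneg
  set M := (x₁ + c) / 2
  have hM : M ∈ Ioo x₁ c := ⟨by simp only [M]; linarith, by simp only [M]; linarith⟩
  have hMb : M < b := hM.2.trans_le hcb
  have hpos : 0 < ∫ τ in s..t, u M τ := by
    refine intervalIntegral.intervalIntegral_pos_of_pos_on ?_ (fun τ hτ =>
      hu.pos hx₁ ⟨hM.1, hMb.le⟩ ⟨hs.trans hτ.1, hτ.2.le.trans ht⟩) hst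
    exact ((hu.continuousOn_uncurry_rect hx₁ hM.1 hMb hs ht).uncurry_left M
      (left_mem_Icc.2 le_rfl)).intervalIntegrable_of_Icc hst.le
  have hanti : ∀ A' ∈ Ioo x₁ M, ∫ τ in s..t, u M τ ≤ ∫ τ in s..t, u A' τ := fun A' hA' => by
    have hdiff := hu.integral_time_sub_eq hx₁ hA'.1 hA'.2.le hMb hs hst.le ht
    have hle := intervalIntegral.integral_nonneg (μ := volume) hA'.2.le
      (f := fun x => -∫ τ in s..t, pdx u x τ)
      fun x hx => neg_nonneg.2 (hneg x ⟨hA'.1.trans_le hx.1, hx.2.trans_lt hM.2⟩).le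
    rw [intervalIntegral.integral_neg, neg_nonneg] at hle
    linarith
  have hle : ∫ τ in s..t, u M τ ≤ 0 :=
    ge_of_tendsto ((hu.tendsto_integral_time hx₁ hs.le hst.le ht).mono_left nhdsWithin_le_nhds)
      (mem_of_superset (Ioo_mem_nhdsGT hM.1) hanti)
  linarith

theorem integral_weight_mul_pde_le (hu : IsClassicalSol a b T {x₁} u₀ u) (hx₁ : x₁ ∈ Ioo a b)
    {A B τ : ℝ} (hA : x₁ < A) (hAB : A ≤ B) (hB : B < b) (hτ : τ ∈ Ioc 0 T)
    (hle : ∀ x ∈ Icc A B, u x τ ≤ 1) :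
    ∫ x in A..B, (B - x) * (pdxx u x τ + (1 - u x τ))
      ≤ (B - x₁) ^ 2 + 1 - (B - A) * pdx u A τ := by
  have hτ' : τ ∈ Icc τ τ := left_mem_Icc.2 le_rfl
  have hx : ∀ x ∈ uIcc A B, x ∈ Ioo x₁ b := fun x hx => by
    rw [uIcc_of_le hAB] at hx
    exact ⟨hA.trans_le hx.1, hx.2.trans_lt hB⟩
  have hu_cont : ContinuousOn (fun x => u x τ) (Icc A B) :=
    (hu.continuousOn_uncurry_rect hx₁ hA hB hτ.1 hτ.2).uncurry_right τ hτ'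
  have hpdx_int : IntervalIntegrable (fun x => pdx u x τ) volume A B :=
    ((hu.continuousOn_uncurry_pdx hx₁ hA hB hτ.1 hτ.2).uncurry_right τ
      hτ').intervalIntegrable_of_Icc hAB
  have hpdxx_cont : ContinuousOn (fun x => pdxx u x τ) (Icc A B) :=
    (hu.continuousOn_uncurry_pdxx hx₁ hA hB hτ.1 hτ.2).uncurry_right τ hτ'
  have htaylor := integral_sub_mul_deriv_deriv
    (fun x hx' => hu.hasDerivAt_x hx₁ (hx x hx') hτ)
    (fun x hx' => hu.hasDerivAt_pdx hx₁ (hx x hx') hτ)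
    hpdx_int (hpdxx_cont.intervalIntegrable_of_Icc hAB)
  have hweight : ContinuousOn (fun x : ℝ => B - x) (Icc A B) := by fun_prop
  have hint₁ : IntervalIntegrable (fun x => (B - x) * pdxx u x τ) volume A B :=
    (hweight.mul hpdxx_cont).intervalIntegrable_of_Icc hAB
  have hint₂ : IntervalIntegrable (fun x => (B - x) * (1 - u x τ)) volume A B :=
    (hweight.mul (continuousOn_const.sub hu_cont)).intervalIntegrable_of_Icc hAB
  have hrest : ∫ x in A..B, (B - x) * (1 - u x τ) ≤ (B - x₁) ^ 2 :=
    calc ∫ x in A..B, (B - x) * (1 - u x τ) ≤ ∫ _ in A..B, (B - x₁) :=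
          intervalIntegral.integral_mono_on hAB hint₂ intervalIntegrable_const fun x hx' => by
            have hpos := hu.pos hx₁ ⟨hA.trans_le hx'.1, (hx'.2.trans_lt hB).le⟩ hτ
            have := hle x hx'
            nlinarith [hx'.1, hx'.2]
      _ = (B - A) * (B - x₁) := by rw [intervalIntegral.integral_const, smul_eq_mul]
      _ ≤ (B - x₁) ^ 2 := by nlinarith
  simp_rw [mul_add]
  rw [intervalIntegral.integral_add hint₁ hint₂, htaylor]
  have hA_pos := hu.pos hx₁ ⟨hA, (hAB.trans_lt hB).le⟩ hτ
  linarith [hle B (right_mem_Icc.2 hAB)]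

theorem continuousOn_weight_mul_neg_log (hu : IsClassicalSol a b T {x₁} u₀ u)
    (hx₁ : x₁ ∈ Ioo a b) {B σ : ℝ} (hB : B ≤ b) (hσ : σ ∈ Ioc 0 T) :
    ContinuousOn (fun x => (B - x) * -Real.log (u x σ)) (Ioc x₁ B) :=
  (continuousOn_const.sub continuousOn_id).mul
    ((((hu.continuousOn_uncurry.uncurry_right σ (Ioc_subset_Icc_self hσ)).mono
      fun _ hx => ⟨(hx₁.1.trans hx.1).le, hx.2.trans hB⟩).log fun _ hx =>
        (hu.pos hx₁ ⟨hx.1, hx.2.trans hB⟩ hσ).ne').neg)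

theorem integral_weight_mul_neg_log_le (hu : IsClassicalSol a b T {x₁} u₀ u)
    (hx₁ : x₁ ∈ Ioo a b) {A B s t : ℝ} (hA : x₁ < A) (hAB : A ≤ B) (hB : B < b) (hs : 0 < s)
    (hst : s ≤ t) (ht : t ≤ T) (hle : ∀ x ∈ Icc A B, ∀ τ ∈ Icc s t, u x τ ≤ 1)
    (hA_flux : 0 ≤ ∫ τ in s..t, pdx u A τ) :
    ∫ x in A..B, (B - x) * -Real.log (u x s)
      ≤ (∫ x in A..B, (B - x) * -Real.log (u x t)) + ((B - x₁) ^ 2 + 1) * (t - s) := by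
  have hG : ContinuousOn (Function.uncurry fun x τ => (B - x) * (pdxx u x τ + (1 - u x τ)))
      (Icc A B ×ˢ Icc s t) :=
    (continuousOn_const.sub continuousOn_fst).mul
      ((hu.continuousOn_uncurry_pdxx hx₁ hA hB hs ht).add
        (continuousOn_const.sub (hu.continuousOn_uncurry_rect hx₁ hA hB hs ht)))
  have hlog_int : ∀ σ ∈ Icc s t,
      IntervalIntegrable (fun x => (B - x) * -Real.log (u x σ)) volume A B := fun σ hσ =>
    ((hu.continuousOn_weight_mul_neg_log hx₁ hB.le ⟨hs.trans_le hσ.1, hσ.2.trans ht⟩).mono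
      (Icc_subset_Ioc_iff hAB |>.2 ⟨hA, le_rfl⟩)).intervalIntegrable_of_Icc hAB
  have hident : (∫ x in A..B, (B - x) * -Real.log (u x s))
      - (∫ x in A..B, (B - x) * -Real.log (u x t))
      = ∫ x in A..B, ∫ τ in s..t, (B - x) * (pdxx u x τ + (1 - u x τ)) := by
    rw [← intervalIntegral.integral_sub (hlog_int s (left_mem_Icc.2 hst))
      (hlog_int t (right_mem_Icc.2 hst))]
    refine intervalIntegral.integral_congr fun x hx => ?_
    rw [uIcc_of_le hAB] at hx
    rw [intervalIntegral.integral_const_mul, ← hu.log_sub_log_eq_integral hx₁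
      ⟨hA.trans_le hx.1, hx.2.trans_lt hB⟩ hs hst ht]
    ring
  have hflux_int : IntervalIntegrable (fun τ => pdx u A τ) volume s t :=
    ((hu.continuousOn_uncurry_pdx hx₁ hA hB hs ht).uncurry_left A
      (left_mem_Icc.2 hAB)).intervalIntegrable_of_Icc hst
  have hbound : ∫ τ in s..t, ∫ x in A..B, (B - x) * (pdxx u x τ + (1 - u x τ))
      ≤ ((B - x₁) ^ 2 + 1) * (t - s) - (B - A) * ∫ τ in s..t, pdx u A τ := by
    calc ∫ τ in s..t, ∫ x in A..B, (B - x) * (pdxx u x τ + (1 - u x τ))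
        ≤ ∫ τ in s..t, ((B - x₁) ^ 2 + 1 - (B - A) * pdx u A τ) :=
          intervalIntegral.integral_mono_on hst
            (intervalIntegrable_intervalIntegral_of_continuousOn hAB hst hG)
            (intervalIntegrable_const.sub (hflux_int.const_mul _)) fun τ hτ =>
              hu.integral_weight_mul_pde_le hx₁ hA hAB hB ⟨hs.trans_le hτ.1, hτ.2.trans ht⟩
                fun x hx => hle x hx τ hτ
      _ = ((B - x₁) ^ 2 + 1) * (t - s) - (B - A) * ∫ τ in s..t, pdx u A τ := by
          rw [intervalIntegral.integral_sub intervalIntegrable_const (hflux_int.const_mul _),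
            intervalIntegral.integral_const, intervalIntegral.integral_const_mul, smul_eq_mul,
            mul_comm (t - s)]
  rw [intervalIntegral_swap_of_continuousOn hAB hst hG] at hident
  nlinarith [mul_nonneg (sub_nonneg.2 hAB) hA_flux]

theorem lintegral_weight_mul_neg_log_le (hu : IsClassicalSol a b T {x₁} u₀ u)
    (hx₁ : x₁ ∈ Ioo a b) {B s t : ℝ} (hB : B ∈ Ioo x₁ b) (hs : 0 < s) (hst : s < t) (ht : t ≤ T)
    (hle : ∀ x ∈ Ioc x₁ B, ∀ τ ∈ Icc s t, u x τ ≤ 1) :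
    ∫⁻ x in Ioo x₁ B, ENNReal.ofReal ((B - x) * -Real.log (u x s))
      ≤ (∫⁻ x in Ioo x₁ B, ENNReal.ofReal ((B - x) * -Real.log (u x t)))
        + ENNReal.ofReal (((B - x₁) ^ 2 + 1) * (t - s)) := by
  have hσ : ∀ σ ∈ Icc s t, σ ∈ Ioc 0 T := fun σ hσ => ⟨hs.trans_le hσ.1, hσ.2.trans ht⟩
  refine setLIntegral_Ioo_le_of_forall_Ioc fun ε hε => ?_
  obtain ⟨A, hA, hA_flux⟩ := hu.exists_integral_pdx_nonneg hx₁ hs hst ht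
    (lt_min (by linarith) hB.1 : x₁ < min (x₁ + ε) B) ((min_le_right _ _).trans hB.2.le)
  have hAB : A ≤ B := hA.2.le.trans (min_le_right _ _)
  have hIcc : Icc A B ⊆ Ioc x₁ B := Icc_subset_Ioc_iff hAB |>.2 ⟨hA.1, le_rfl⟩
  have hmass : ∀ σ ∈ Icc s t, ENNReal.ofReal (∫ x in A..B, (B - x) * -Real.log (u x σ))
      = ∫⁻ x in Ioc A B, ENNReal.ofReal ((B - x) * -Real.log (u x σ)) := fun σ hσ' =>
    ofReal_intervalIntegral_eq_setLIntegral hAB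
      ((hu.continuousOn_weight_mul_neg_log hx₁ hB.2.le (hσ σ hσ')).mono hIcc) fun x hx =>
        weight_mul_neg_log_nonneg hx.2 (hu.pos hx₁ ⟨hA.1.trans hx.1, hx.2.trans hB.2.le⟩
          (hσ σ hσ')) (hle x (hIcc (Ioc_subset_Icc_self hx)) σ hσ')
  calc ∫⁻ x in Ioc (x₁ + ε) B, ENNReal.ofReal ((B - x) * -Real.log (u x s))
      ≤ ∫⁻ x in Ioc A B, ENNReal.ofReal ((B - x) * -Real.log (u x s)) :=
        lintegral_mono_set (Ioc_subset_Ioc_left (hA.2.le.trans (min_le_left _ _)))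
    _ ≤ ENNReal.ofReal ((∫ x in A..B, (B - x) * -Real.log (u x t))
          + ((B - x₁) ^ 2 + 1) * (t - s)) := by
        rw [← hmass s (left_mem_Icc.2 hst.le)]
        exact ENNReal.ofReal_le_ofReal (hu.integral_weight_mul_neg_log_le hx₁ hA.1 hAB hB.2 hs
          hst.le ht (fun x hx τ hτ => hle x (hIcc hx) τ hτ) hA_flux)
    _ ≤ (∫⁻ x in Ioc A B, ENNReal.ofReal ((B - x) * -Real.log (u x t)))
          + ENNReal.ofReal (((B - x₁) ^ 2 + 1) * (t - s)) := by
        rw [← hmass t (right_mem_Icc.2 hst.le)]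
        exact ENNReal.ofReal_add_le
    _ ≤ _ := by
        refine add_le_add_left ?_ _
        rw [setLIntegral_congr Ioo_ae_eq_Ioc]
        exact lintegral_mono_set (Ioc_subset_Ioc_left hA.1.le)

theorem lintegral_weight_mul_neg_log_initial_eq_top (hu : IsClassicalSol a b T {x₁} u₀ u)
    (hx₁ : x₁ ∈ Ioo a b) (hlog : ∫⁻ x in Ioo x₁ b, ENNReal.ofReal |Real.log (u₀ x)| = ∞)
    (hT : 0 ≤ T) {B : ℝ} (hB : B ∈ Ioo x₁ b) (hle : ∀ x ∈ Ioc x₁ B, |u x 0| ≤ 1) :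
    ∫⁻ x in Ioo x₁ B, ENNReal.ofReal ((B - x) * -Real.log (u x 0)) = ∞ := by
  have h0 : (0 : ℝ) ∈ Icc 0 T := left_mem_Icc.2 hT
  set M := (x₁ + B) / 2
  have hM : M ∈ Ioo x₁ B := ⟨by simp only [M]; linarith [hB.1], by simp only [M]; linarith [hB.1]⟩
  have hlog' : ∫⁻ x in Ioo x₁ b, ENNReal.ofReal |Real.log (u x 0)| = ∞ := by
    rwa [setLIntegral_congr_fun measurableSet_Ioo fun x hx => by
      rw [hu.init x ⟨hx₁.1.trans hx.1, hx.2⟩]]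
  have hnear : ∫⁻ x in Ioo x₁ M, ENNReal.ofReal |Real.log (u x 0)| = ∞ := by
    refine setLIntegral_Ioo_eq_top_of_continuousOn (ContinuousOn.abs ?_) hlog'
    refine ((hu.continuousOn_uncurry.uncurry_right 0 h0).mono fun x hx =>
      ⟨(hx₁.1.trans (hM.1.trans_le hx.1)).le, hx.2⟩).log fun x hx hx0 => ?_
    have : x = x₁ := (hu.zero_iff x ⟨(hx₁.1.trans (hM.1.trans_le hx.1)).le, hx.2⟩ 0 h0).1 hx0
    exact (hM.1.trans_le hx.1).ne' this
  have hweighted : ∫⁻ x in Ioo x₁ M, ENNReal.ofReal ((B - x) * -Real.log (u x 0)) = ∞ := by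
    refine setLIntegral_eq_top_of_le_const_mul measurableSet_Ioo ENNReal.ofReal_ne_top
      (K := ENNReal.ofReal (2 / (B - x₁))) (fun x hx => ?_) hnear
    have hBx₁ : 0 < B - x₁ := sub_pos.2 hB.1
    have hlog0 : Real.log (u x 0) ≤ 0 := by
      rw [← Real.log_abs]
      exact Real.log_nonpos (abs_nonneg _) (hle x ⟨hx.1, hx.2.le.trans hM.2.le⟩)
    have hfactor : 1 ≤ 2 / (B - x₁) * (B - x) := by
      have hxM : x < (x₁ + B) / 2 := hx.2
      rw [div_mul_eq_mul_div, le_div_iff₀ hBx₁]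
      linarith
    rw [← ENNReal.ofReal_mul (by positivity), abs_of_nonpos hlog0, ← mul_assoc]
    exact ENNReal.ofReal_le_ofReal (le_mul_of_one_le_left (neg_nonneg.2 hlog0) hfactor)
  exact eq_top_iff.2 (hweighted ▸ lintegral_mono_set (Ioo_subset_Ioo_right hM.2.le))

theorem lintegral_weight_mul_neg_log_eq_top (hu : IsClassicalSol a b T {x₁} u₀ u)
    (hx₁ : x₁ ∈ Ioo a b) {B t : ℝ} (hB : B ∈ Ioo x₁ b) (ht : t ∈ Ioc 0 T)
    (hle : ∀ x ∈ Ioc x₁ B, ∀ τ ∈ Icc 0 T, |u x τ| ≤ 1)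
    (h₀ : ∫⁻ x in Ioo x₁ B, ENNReal.ofReal ((B - x) * -Real.log (u x 0)) = ∞) :
    ∫⁻ x in Ioo x₁ B, ENNReal.ofReal ((B - x) * -Real.log (u x t)) = ∞ := by
  set f : ℝ → ℝ → ℝ≥0∞ := fun σ x => ENNReal.ofReal ((B - x) * -Real.log (u x σ))
  obtain ⟨σ, -, hσ, hσ_lim⟩ := exists_seq_strictAnti_tendsto' ht.1
  have hσT : ∀ n, σ n ∈ Ioc 0 T := fun n => ⟨(hσ n).1, (hσ n).2.le.trans ht.2⟩
  have hmeas : ∀ n, AEMeasurable (f (σ n)) (volume.restrict (Ioo x₁ B)) := fun n =>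
    ((ENNReal.continuous_ofReal.comp_continuousOn (hu.continuousOn_weight_mul_neg_log hx₁
      hB.2.le (hσT n))).mono Ioo_subset_Ioc_self).aemeasurable measurableSet_Ioo
  have hlim : ∀ x ∈ Ioo x₁ B, Tendsto (fun n => f (σ n) x) atTop (𝓝 (f 0 x)) := fun x hx => by
    have hx' : x ∈ Icc a b := ⟨(hx₁.1.trans hx.1).le, (hx.2.trans hB.2).le⟩
    have h0 : (0 : ℝ) ∈ Icc 0 T := left_mem_Icc.2 (ht.1.le.trans ht.2)
    have hu_lim : Tendsto (fun n => u x (σ n)) atTop (𝓝 (u x 0)) :=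
      ((hu.continuousOn_uncurry.uncurry_left x hx') 0 h0).tendsto.comp
        (tendsto_nhdsWithin_iff.2
          ⟨hσ_lim, Eventually.of_forall fun n => Ioc_subset_Icc_self (hσT n)⟩)
    have hne : u x 0 ≠ 0 := fun h => hx.1.ne' ((hu.zero_iff x hx' 0 h0).1 h)
    exact (ENNReal.continuous_ofReal.tendsto _).comp
      (tendsto_const_nhds.mul ((Real.continuousAt_log hne).tendsto.comp hu_lim).neg)
  have hchain : ∀ n, ∫⁻ x in Ioo x₁ B, f (σ n) x
      ≤ (∫⁻ x in Ioo x₁ B, f t x) + ENNReal.ofReal (((B - x₁) ^ 2 + 1) * t) := fun n =>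
    (hu.lintegral_weight_mul_neg_log_le hx₁ hB (hσT n).1 (hσ n).2 ht.2 fun x hx τ hτ =>
      (le_abs_self _).trans (hle x hx τ ⟨(hσT n).1.le.trans hτ.1, hτ.2.trans ht.2⟩)).trans
      (by gcongr; linarith [(hσ n).1])
  have htop : ∞ ≤ (∫⁻ x in Ioo x₁ B, f t x) + ENNReal.ofReal (((B - x₁) ^ 2 + 1) * t) :=
    calc ∞ = ∫⁻ x in Ioo x₁ B, f 0 x := h₀.symm
      _ = ∫⁻ x in Ioo x₁ B, liminf (fun n => f (σ n) x) atTop :=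
          setLIntegral_congr_fun measurableSet_Ioo fun x hx => (hlim x hx).liminf_eq.symm
      _ ≤ liminf (fun n => ∫⁻ x in Ioo x₁ B, f (σ n) x) atTop := lintegral_liminf_le' hmeas
      _ ≤ _ := liminf_le_of_frequently_le' (Frequently.of_forall hchain)
  by_contra hne
  exact ENNReal.add_ne_top.2 ⟨hne, ENNReal.ofReal_ne_top⟩ (top_le_iff.1 htop)

theorem lintegral_neg_log_eq_top (hu : IsClassicalSol a b T {x₁} u₀ u) (hx₁ : x₁ ∈ Ioo a b)
    (hlog : ∫⁻ x in Ioo x₁ b, ENNReal.ofReal |Real.log (u₀ x)| = ∞) {t c : ℝ}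
    (ht : t ∈ Ioc 0 T) (hc : x₁ < c) :
    ∫⁻ x in Ioo x₁ c, ENNReal.ofReal (-Real.log (u x t)) = ∞ := by
  obtain ⟨B, hB, hstrip⟩ := mem_nhdsGT_iff_exists_Ioc_subset.1 <| nhdsWithin_le_nhds <|
    (hu.eventually_forall_abs_lt hx₁ one_pos).and
      ((eventually_lt_nhds hc).and (eventually_lt_nhds hx₁.2))
  have hle : ∀ x ∈ Ioc x₁ B, ∀ τ ∈ Icc 0 T, |u x τ| ≤ 1 := fun x hx τ hτ =>
    ((hstrip hx).1 τ hτ).le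
  obtain ⟨-, hBc, hBb⟩ := hstrip (right_mem_Ioc.2 hB)
  have hweighted := hu.lintegral_weight_mul_neg_log_eq_top hx₁ ⟨hB, hBb⟩ ht hle
    (hu.lintegral_weight_mul_neg_log_initial_eq_top hx₁ hlog (ht.1.le.trans ht.2) ⟨hB, hBb⟩
      fun x hx => hle x hx 0 (left_mem_Icc.2 (ht.1.le.trans ht.2)))
  refine eq_top_iff.2 ((setLIntegral_eq_top_of_le_const_mul measurableSet_Ioo ENNReal.ofReal_ne_top
    (K := ENNReal.ofReal (B - x₁)) (fun x hx => ?_) hweighted) ▸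
      lintegral_mono_set (Ioo_subset_Ioo_right hBc.le))
  have hpos := hu.pos hx₁ ⟨hx.1, hx.2.le.trans hBb.le⟩ ht
  have hlog0 : 0 ≤ -Real.log (u x t) := neg_nonneg.2 (Real.log_nonpos hpos.le
    ((le_abs_self _).trans (hle x ⟨hx.1, hx.2.le⟩ t (Ioc_subset_Icc_self ht))))
  rw [← ENNReal.ofReal_mul (sub_pos.2 hB).le]
  exact ENNReal.ofReal_le_ofReal (mul_le_mul_of_nonneg_right (by linarith [hx.1]) hlog0)

theorem lintegral_neg_log_mul_eq_top (hu : IsClassicalSol a b T {x₁} u₀ u) (hx₁ : x₁ ∈ Ioo a b)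
    (hlog : ∫⁻ x in Ioo x₁ b, ENNReal.ofReal |Real.log (u₀ x)| = ∞) {t : ℝ} (ht : t ∈ Ioc 0 T)
    {ψ : ℝ → ℝ} (hψ : ContinuousAt ψ x₁) (hψ₁ : ψ x₁ = 1) :
    ∫⁻ x in Ioo x₁ b, ENNReal.ofReal (-(Real.log (u x t) * ψ x)) = ∞ := by
  have hnear : {x | 1 / 2 < ψ x} ∩ Ioo x₁ b ∈ 𝓝[>] x₁ :=
    inter_mem (nhdsWithin_le_nhds (hψ.preimage_mem_nhds (Ioi_mem_nhds (by rw [hψ₁]; norm_num))))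
      (Ioo_mem_nhdsGT hx₁.2)
  obtain ⟨c, hc, hsub⟩ := mem_nhdsGT_iff_exists_Ioo_subset.1 hnear
  refine eq_top_iff.2 ((setLIntegral_eq_top_of_le_const_mul measurableSet_Ioo ENNReal.ofReal_ne_top
    (K := ENNReal.ofReal 2) (fun x hx => ?_) (hu.lintegral_neg_log_eq_top hx₁ hlog ht hc)) ▸
      lintegral_mono_set fun x hx => (hsub hx).2)
  have hψx : 1 / 2 < ψ x := (hsub hx).1
  rw [← ENNReal.ofReal_mul zero_le_two]
  rcases le_total (Real.log (u x t)) 0 with hlog0 | hlog0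
  · exact ENNReal.ofReal_le_ofReal (by nlinarith)
  · rw [ENNReal.ofReal_eq_zero.2 (neg_nonpos.2 hlog0)]
    exact zero_le

theorem eq_zero_of_tendsto_pdx (hu : IsClassicalSol a b T {x₁} u₀ u) (hx₁ : x₁ ∈ Ioo a b)
    (hlog : ∫⁻ x in Ioo x₁ b, ENNReal.ofReal |Real.log (u₀ x)| = ∞) {t L : ℝ} (ht : t ∈ Ioc 0 T)
    (hL : Tendsto (fun y => pdx u y t) (𝓝[>] x₁) (𝓝 L)) : L = 0 := by
  have hderiv : HasDerivWithinAt (fun x => u x t) L (Ioi x₁) x₁ :=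
    (hasDerivWithinAt_Ici_of_tendsto_deriv (s := Ioo x₁ b)
      (fun x hx => (hu.hasDerivAt_x hx₁ hx ht).differentiableAt.differentiableWithinAt)
      (((hu.continuousOn_uncurry.uncurry_right t (Ioc_subset_Icc_self ht)) x₁
        (Ioo_subset_Icc_self hx₁)).mono fun x hx => ⟨(hx₁.1.trans hx.1).le, hx.2.le⟩)
      (Ioo_mem_nhdsGT hx₁.2) hL).mono Ioi_subset_Ici_self
  have hslope : Tendsto (fun x => u x t / (x - x₁)) (𝓝[>] x₁) (𝓝 L) := by
    refine ((hasDerivWithinAt_iff_tendsto_slope' (lt_irrefl x₁)).1 hderiv).congr fun x => ?_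
    rw [slope_def_field, hu.eq_zero hx₁ (Ioc_subset_Icc_self ht), sub_zero]
  rcases lt_trichotomy L 0 with hL0 | hL0 | hL0
  · obtain ⟨x, hneg, hx⟩ :=
      ((hslope.eventually (gt_mem_nhds hL0)).and (Ioo_mem_nhdsGT hx₁.2)).exists
    exact absurd hneg (div_pos (hu.pos hx₁ ⟨hx.1, hx.2.le⟩ ht) (sub_pos.2 hx.1)).not_gt
  · exact hL0
  · obtain ⟨c, hc, hsub⟩ :=
      mem_nhdsGT_iff_exists_Ioo_subset.1 (hslope.eventually (lt_mem_nhds (half_lt_self hL0)))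
    exact absurd (hu.lintegral_neg_log_eq_top hx₁ hlog ht hc)
      (setLIntegral_ofReal_neg_log_ne_top (half_pos hL0) fun x hx =>
        ((lt_div_iff₀ (sub_pos.2 hx.1)).1 (hsub hx)).le)

end IsClassicalSol

theorem stmt12_general (a b T x₁ : ℝ)
    (u₀ : ℝ → ℝ)
    (hx₁ : x₁ ∈ Set.Ioo a b)
    (hlog : ∫⁻ x in Set.Ioo x₁ b, ENNReal.ofReal |Real.log (u₀ x)| = ⊤)
    (u : ℝ → ℝ → ℝ) (hu : IsClassicalSol a b T {x₁} u₀ u)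
    (uxp : ℝ → ℝ)
    (huxp : ∀ t ∈ Set.Ioc (0:ℝ) T, Tendsto (fun y => pdx u y t) (𝓝[>] x₁) (𝓝 (uxp t))) :
    (∀ t ∈ Set.Ioc (0:ℝ) T, ∀ ψ : ℝ → ℝ, ContDiff ℝ 1 ψ → ψ x₁ = 1 → ψ b = 0 →
      (∀ x ∈ Set.Icc x₁ b, deriv ψ x ≤ 0) →
      ∫⁻ x in Set.Ioo x₁ b, ENNReal.ofReal (-(Real.log (u x t) * ψ x)) = ⊤) ∧
    ∀ t ∈ Set.Ioc (0:ℝ) T, uxp t = 0 :=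
  ⟨fun _ ht _ hψ hψ₁ _ _ =>
    hu.lintegral_neg_log_mul_eq_top hx₁ hlog ht hψ.continuous.continuousAt hψ₁,
    fun t ht => hu.eq_zero_of_tendsto_pdx hx₁ hlog ht (huxp t ht)⟩

/-- Remark 6.2 (infinite waiting time): if `u₀` is strictly increasing with unique zero `x₁`
and `log u₀ ∉ L¹(x₁,b)`, then `∫_{x₁}^b log u(x,t) ψ(x) dx = -∞` for all `t ∈ (0,T]` and all
admissible `ψ`; consequently `τ₁⁺ = ∞`, i.e. `u_x(x₁⁺,t) = 0` for all `t ∈ (0,T]`. -/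
theorem stmt12 (a b T x₁ : ℝ) (hab : a < b) (hT : 0 < T)
    (u₀ : ℝ → ℝ) (h₀c : ContinuousOn u₀ (Set.Icc a b))
    (h₀m : StrictMonoOn u₀ (Set.Icc a b))
    (h₀a : u₀ a = -1) (h₀b : u₀ b = 1)
    (hx₁ : x₁ ∈ Set.Ioo a b) (h₀z : u₀ x₁ = 0)
    (hlog : ∫⁻ x in Set.Ioo x₁ b, ENNReal.ofReal |Real.log (u₀ x)| = ⊤)
    (u : ℝ → ℝ → ℝ) (hu : IsClassicalSol a b T {x₁} u₀ u)
    (uxp : ℝ → ℝ)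
    (huxp : ∀ t ∈ Set.Ioc (0:ℝ) T, Tendsto (fun y => pdx u y t) (𝓝[>] x₁) (𝓝 (uxp t))) :
    (∀ t ∈ Set.Ioc (0:ℝ) T, ∀ ψ : ℝ → ℝ, ContDiff ℝ 1 ψ → ψ x₁ = 1 → ψ b = 0 →
      (∀ x ∈ Set.Icc x₁ b, deriv ψ x ≤ 0) →
      ∫⁻ x in Set.Ioo x₁ b, ENNReal.ofReal (-(Real.log (u x t) * ψ x)) = ⊤) ∧
    ∀ t ∈ Set.Ioc (0:ℝ) T, uxp t = 0 :=
  stmt12_general a b T x₁ u₀ hx₁ hlog u hu uxp huxp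
end

section
/- For all ε > 0 and δ > 0 one has the identity ∫₀^δ dw/(ε + Φ_ε²(w)) = 2 log( ( Φ_ε(δ) + √(ε + Φ_ε²(δ)) ) / √ε ). -/
open Set Filter Topology MeasureTheory

/-- `U_ε(φ) = 2∫₀^φ √(ε + s²) ds` (equation (1.3)); its inverse is `Φ_ε`. -/
noncomputable def Ureg (ε φ : ℝ) : ℝ := 2 * ∫ s in (0:ℝ)..φ, Real.sqrt (ε + s ^ 2)

/-!
Substituting `w = U_ε(φ)` turns the integral into `∫₀^{Φ_ε(δ)} U_ε'(φ) / (ε + φ²) dφ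
= ∫₀^{Φ_ε(δ)} 2 / √(ε + φ²) dφ = 2 arsinh(Φ_ε(δ) / √ε)`, and `arsinh` is the logarithm on the
right-hand side.
-/

lemma continuous_sqrt_const_add_sq (ε : ℝ) : Continuous fun s : ℝ => Real.sqrt (ε + s ^ 2) := by
  fun_prop

lemma hasDerivAt_Ureg (ε x : ℝ) : HasDerivAt (Ureg ε) (2 * Real.sqrt (ε + x ^ 2)) x :=
  (intervalIntegral.integral_hasDerivAt_right
    ((continuous_sqrt_const_add_sq ε).intervalIntegrable _ _)
    ((continuous_sqrt_const_add_sq ε).stronglyMeasurableAtFilter _ _)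
    (continuous_sqrt_const_add_sq ε).continuousAt).const_mul 2

lemma Ureg_strictMono {ε : ℝ} (hε : 0 < ε) : StrictMono (Ureg ε) :=
  strictMono_of_deriv_pos fun x => by
    rw [(hasDerivAt_Ureg ε x).deriv]
    positivity

@[simp]
lemma Ureg_zero (ε : ℝ) : Ureg ε 0 = 0 := by simp [Ureg]

lemma continuous_of_leftInverse_of_strictMono {f g : ℝ → ℝ} (hf : StrictMono f)
    (hl : Function.LeftInverse g f) (hr : Function.RightInverse g f) : Continuous g := by
  refine Monotone.continuous_of_surjective (fun a b hab => ?_) hl.surjective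
  rwa [← hf.le_iff_le, hr a, hr b]

lemma Real.sqrt_one_add_div_sqrt_sq {ε : ℝ} (hε : 0 < ε) (x : ℝ) :
    √(1 + (x / √ε) ^ 2) = √(ε + x ^ 2) / √ε := by
  rw [← Real.sqrt_div' _ hε.le, div_pow, Real.sq_sqrt hε.le]
  congr 1
  field_simp

lemma Real.arsinh_div_sqrt {ε : ℝ} (hε : 0 < ε) (x : ℝ) :
    Real.arsinh (x / √ε) = Real.log ((x + √(ε + x ^ 2)) / √ε) := by
  rw [Real.arsinh, Real.sqrt_one_add_div_sqrt_sq hε, add_div]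

lemma hasDerivAt_arsinh_div_sqrt {ε : ℝ} (hε : 0 < ε) (x : ℝ) :
    HasDerivAt (fun x => Real.arsinh (x / √ε)) (√(ε + x ^ 2))⁻¹ x := by
  have h := (Real.hasDerivAt_arsinh (x / √ε)).comp x ((hasDerivAt_id x).div_const √ε)
  refine h.congr_deriv ?_
  rw [Real.sqrt_one_add_div_sqrt_sq hε, one_div, ← mul_inv, div_mul_cancel₀]
  exact (Real.sqrt_pos.2 hε).ne'

lemma integral_inv_sqrt_const_add_sq {ε : ℝ} (hε : 0 < ε) (b : ℝ) :
    ∫ x in (0:ℝ)..b, (√(ε + x ^ 2))⁻¹ = Real.arsinh (b / √ε) := by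
  have hcont : Continuous fun x : ℝ => (√(ε + x ^ 2))⁻¹ :=
    (continuous_sqrt_const_add_sq ε).inv₀ fun x => by positivity
  rw [intervalIntegral.integral_eq_sub_of_hasDerivAt
    (fun x _ => hasDerivAt_arsinh_div_sqrt hε x) (hcont.intervalIntegrable _ _)]
  simp

theorem stmt18_general (ε δ : ℝ) (hε : 0 < ε) (Φ : ℝ → ℝ)
    (hΦl : Function.LeftInverse Φ (Ureg ε))
    (hΦr : Function.RightInverse Φ (Ureg ε)) :
    ∫ w in (0:ℝ)..δ, (ε + Φ w ^ 2)⁻¹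
      = 2 * Real.log ((Φ δ + Real.sqrt (ε + Φ δ ^ 2)) / Real.sqrt ε) := by
  have hΦ : Continuous Φ := continuous_of_leftInverse_of_strictMono (Ureg_strictMono hε) hΦl hΦr
  have hsubst := intervalIntegral.integral_comp_mul_deriv (a := 0) (b := Φ δ)
    (g := fun w => (ε + Φ w ^ 2)⁻¹) (fun x _ => hasDerivAt_Ureg ε x) (by fun_prop)
    ((continuous_const.add (hΦ.pow 2)).inv₀ fun w => (by positivity : 0 < ε + Φ w ^ 2).ne')
  rw [Ureg_zero, hΦr δ] at hsubst
  rw [← hsubst, ← Real.arsinh_div_sqrt hε, ← integral_inv_sqrt_const_add_sq hε,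
    ← intervalIntegral.integral_const_mul]
  refine intervalIntegral.integral_congr fun x _ => ?_
  simp only [Function.comp_apply, hΦl x]
  rw [← Real.sqrt_div_self]
  ring

/-- Identity (4.20): for all `ε, δ > 0`,
`∫₀^δ dw/(ε + Φ_ε²(w)) = 2 log((Φ_ε(δ) + √(ε + Φ_ε²(δ)))/√ε)`. -/
theorem stmt18 (ε δ : ℝ) (hε : 0 < ε) (hδ : 0 < δ) (Φ : ℝ → ℝ)
    (hΦl : Function.LeftInverse Φ (Ureg ε))
    (hΦr : Function.RightInverse Φ (Ureg ε)) :
    ∫ w in (0:ℝ)..δ, (ε + Φ w ^ 2)⁻¹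
      = 2 * Real.log ((Φ δ + Real.sqrt (ε + Φ δ ^ 2)) / Real.sqrt ε) :=
  stmt18_general ε δ hε Φ hΦl hΦr
end
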